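/- arXiv:2209.06807 — 5 statements merged into one kernel-verified Lean document; each statement's English description precedes it below -/
import Mathlib

section
/- Let ε ∈ (0, 1/2] and let t ≥ 1 be an integer, and suppose n ≥ (1/ε)^{16t}. Then every 2-edge-colouring of the complete graph K_n in which each colour class has at least ε·n² edges contains two disjoint t-element vertex sets S and T and colours c₁, c₂, c₃ (each red or blue, not all three equal) such that every edge inside S has colour c₁, every edge inside T has colour c₂, and every edge between S and T has colour c₃. (Equivalently, K_n contains a complete subgraph on 2t vertices in which one colour class forms either a K_{t,t} or a clique K_t.) -/
/-!
Dependent random choice in a colour class `c` with at least `εn²` edges yields `4^t` vertices any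
`t` of which have `2^{12t}` common `c`-neighbours. If these contain a `t`-clique of the other
colour, a monochromatic `t`-set among its common neighbours completes the pattern. Otherwise
Ramsey's bound `R(t, t) ≤ 4^t` gives a `c`-clique `S` there; either its common neighbourhood
contains a `t`-clique of the other colour (a pattern again), or it is a set of `2^{11t}` vertices
without one.

Doing this for both colours gives `F_red` without blue `t`-cliques and `F_blue` without red ones.
By Ramsey they share fewer than `4^t` vertices, so they contain disjoint `X`, `Y` of size `2^{9t}`.
Some colour `d` fills half of the pairs between `X` and `Y`; dependent random choice in that
bipartite graph, started from the side without `d`-cliques, yields a `t`-clique of the other colour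
with `4^t` common `d`-neighbours across, and a monochromatic `t`-set among these is the pattern.
-/

open Finset

lemma two_pow_add_two_pow_le {a b c : ℕ} (ha : a < c) (hb : b < c) : 2 ^ a + 2 ^ b ≤ 2 ^ c := by
  have := Nat.pow_le_pow_right two_pos (Nat.le_pred_of_lt ha)
  have := Nat.pow_le_pow_right two_pos (Nat.le_pred_of_lt hb)
  rw [← Nat.succ_pred_eq_of_pos (Nat.zero_lt_of_lt ha), pow_succ]
  omega

lemma card_mul_pow_sum_le {ι : Type*} (s : Finset ι) (f : ι → ℕ) :
    ∀ r, #s * (∑ i ∈ s, f i) ^ r ≤ #s ^ r * ∑ i ∈ s, f i ^ r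
  | 0 => by simp
  | r + 1 => by
    rw [pow_succ' (#s) r, mul_assoc]
    exact Nat.mul_le_mul_left _ (pow_sum_le_card_mul_sum_pow (fun _ _ => Nat.zero_le _) r)

lemma card_filter_piFinset_forall {α : Type*} (s : Finset α) (p : α → Prop) [DecidablePred p]
    (r : ℕ) :
    #{f ∈ Fintype.piFinset fun _ : Fin r => s | ∀ i, p (f i)} = #{a ∈ s | p a} ^ r := by
  rw [← Fintype.card_piFinset_const]
  congr 1
  ext f
  simp [forall_and]

lemma exists_card_le_forall_not_disjoint {α : Type*} [DecidableEq α] (𝒜 : Finset (Finset α))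
    (h𝒜 : ∀ s ∈ 𝒜, s.Nonempty) :
    ∃ R : Finset α, #R ≤ #𝒜 ∧ ∀ s ∈ 𝒜, ¬Disjoint R s := by
  choose g hg using h𝒜
  refine ⟨𝒜.attach.image fun s => g s.1 s.2, card_image_le.trans card_attach.le, fun s hs => ?_⟩
  exact not_disjoint_iff.2 ⟨g s hs, mem_image.2 ⟨⟨s, hs⟩, mem_attach _ _, rfl⟩, hg s hs⟩

namespace TwoColoring

variable {α : Type*} (col : α → α → Bool)

def neighbors (c : Bool) (Y : Finset α) (x : α) : Finset α :=
  {y ∈ Y | col x y = c}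

def commonNeighbors (c : Bool) (Y S : Finset α) : Finset α :=
  {y ∈ Y | ∀ x ∈ S, col x y = c}

def IsMonoClique (c : Bool) (S : Finset α) : Prop :=
  ∀ u ∈ S, ∀ v ∈ S, u ≠ v → col u v = c

def HasMonoClique (c : Bool) (k : ℕ) (X : Finset α) : Prop :=
  ∃ S ⊆ X, #S = k ∧ IsMonoClique col c S

def HasBlockPattern (t : ℕ) : Prop :=
  ∃ (S T : Finset α) (c₁ c₂ c₃ : Bool),
    Disjoint S T ∧ #S = t ∧ #T = t ∧ ¬(c₁ = c₂ ∧ c₂ = c₃) ∧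
    IsMonoClique col c₁ S ∧ IsMonoClique col c₂ T ∧ ∀ u ∈ S, ∀ v ∈ T, col u v = c₃

variable {col}

lemma card_neighbors_add_card_neighbors_not (c : Bool) (Y : Finset α) (x : α) :
    #(neighbors col c Y x) + #(neighbors col (!c) Y x) = #Y := by
  simpa [neighbors, Bool.eq_not] using card_filter_add_card_filter_not (s := Y) (col x · = c)

lemma sum_card_neighbors_comm (hsym : ∀ u v, col u v = col v u) (c : Bool) (X Y : Finset α) :
    ∑ x ∈ X, #(neighbors col c Y x) = ∑ y ∈ Y, #(neighbors col c X y) := by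
  calc ∑ x ∈ X, #(neighbors col c Y x) = ∑ y ∈ Y, #{x ∈ X | col x y = c} :=
        sum_card_bipartiteAbove_eq_sum_card_bipartiteBelow _
    _ = ∑ y ∈ Y, #(neighbors col c X y) :=
        sum_congr rfl fun y _ => congrArg card (filter_congr fun x _ => by rw [hsym])

lemma two_mul_card_lt_le_sum_card_neighbors [LinearOrder α] [Fintype α]
    (hsym : ∀ u v, col u v = col v u) (c : Bool) :
    2 * #{p : α × α | p.1 < p.2 ∧ col p.1 p.2 = c} ≤ ∑ x, #(neighbors col c univ x) := by
  have hswap : #{p : α × α | p.2 < p.1 ∧ col p.1 p.2 = c} =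
      #{p : α × α | p.1 < p.2 ∧ col p.1 p.2 = c} :=
    card_equiv (Equiv.prodComm α α) (by simp [hsym])
  calc 2 * #{p : α × α | p.1 < p.2 ∧ col p.1 p.2 = c}
      = #{p : α × α | p.1 < p.2 ∧ col p.1 p.2 = c} +
          #{p : α × α | p.2 < p.1 ∧ col p.1 p.2 = c} := by omega
    _ = #{p : α × α | (p.1 < p.2 ∧ col p.1 p.2 = c) ∨ (p.2 < p.1 ∧ col p.1 p.2 = c)} := by
        rw [filter_or, card_union_of_disjoint (disjoint_filter.2 fun p _ h h' => lt_asymm h.1 h'.1)]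
    _ ≤ #{p : α × α | col p.1 p.2 = c} := card_le_card fun p => by
        simp only [mem_filter, mem_univ, true_and]; tauto
    _ = ∑ x, #(neighbors col c univ x) := by
        simp only [neighbors, card_filter, ← univ_product_univ, sum_product]

lemma HasMonoClique.mono {c : Bool} {k : ℕ} {X X' : Finset α} (h : HasMonoClique col c k X)
    (hX : X ⊆ X') : HasMonoClique col c k X' :=
  let ⟨S, hSX, hS⟩ := h; ⟨S, hSX.trans hX, hS⟩

lemma hasMonoClique_zero (c : Bool) (X : Finset α) : HasMonoClique col c 0 X :=
  ⟨∅, empty_subset X, card_empty, by simp [IsMonoClique]⟩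

variable [DecidableEq α]

lemma HasMonoClique.succ_of_neighbors (hsym : ∀ u v, col u v = col v u) {c : Bool} {k : ℕ}
    {X : Finset α} {x : α} (hx : x ∈ X)
    (h : HasMonoClique col c k (neighbors col c (X.erase x) x)) :
    HasMonoClique col c (k + 1) X := by
  obtain ⟨S, hSN, hSk, hS⟩ := h
  have hSX : S ⊆ X.erase x := hSN.trans (filter_subset _ _)
  have hxS : x ∉ S := fun h => (X.notMem_erase x) (hSX h)
  have hxc : ∀ y ∈ S, col x y = c := fun y hy => (mem_filter.1 (hSN hy)).2
  refine ⟨insert x S, insert_subset hx (hSX.trans (erase_subset x X)),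
    by rw [card_insert_of_notMem hxS, hSk], ?_⟩
  intro u hu v hv huv
  rcases mem_insert.1 hu with rfl | huS
  · exact hxc v ((mem_insert.1 hv).resolve_left huv.symm)
  rcases mem_insert.1 hv with rfl | hvS
  · rw [hsym]; exact hxc u huS
  · exact hS u huS v hvS huv

theorem hasMonoClique_or_of_two_pow_le (hsym : ∀ u v, col u v = col v u) (c : Bool) :
    ∀ (a b : ℕ) (X : Finset α), 2 ^ (a + b) ≤ #X →
      HasMonoClique col c a X ∨ HasMonoClique col (!c) b X
  | 0, _, X, _ => .inl (hasMonoClique_zero c X)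
  | _ + 1, 0, X, _ => .inr (hasMonoClique_zero (!c) X)
  | a + 1, b + 1, X, hX => by
    obtain ⟨x, hx⟩ : X.Nonempty := card_pos.1 (lt_of_lt_of_le (Nat.two_pow_pos _) hX)
    have hsplit := card_neighbors_add_card_neighbors_not (col := col) c (X.erase x) x
    rw [card_erase_of_mem hx] at hsplit
    have hpow : 2 ^ (a + 1 + (b + 1)) = 2 * 2 ^ (a + b + 1) := by ring
    rcases (by omega : 2 ^ (a + b + 1) ≤ #(neighbors col c (X.erase x) x) ∨
      2 ^ (a + b + 1) ≤ #(neighbors col (!c) (X.erase x) x)) with h | h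
    · rcases hasMonoClique_or_of_two_pow_le hsym c a (b + 1) _
        (by rwa [show a + (b + 1) = a + b + 1 by omega]) with h | h
      · exact .inl (h.succ_of_neighbors hsym hx)
      · exact .inr (h.mono ((filter_subset _ _).trans (erase_subset x X)))
    · rcases hasMonoClique_or_of_two_pow_le hsym c (a + 1) b _
        (by rwa [show a + 1 + b = a + b + 1 by omega]) with h | h
      · exact .inl (h.mono ((filter_subset _ _).trans (erase_subset x X)))
      · exact .inr (h.succ_of_neighbors hsym hx)

theorem hasMonoClique_or_of_four_pow_le (hsym : ∀ u v, col u v = col v u) (c : Bool) {k : ℕ}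
    {X : Finset α} (hX : 4 ^ k ≤ #X) :
    HasMonoClique col c k X ∨ HasMonoClique col (!c) k X :=
  hasMonoClique_or_of_two_pow_le hsym c k k X (by rwa [← two_mul, pow_mul])

/-- Dependent random choice, by averaging over the `r`-tuples `f` of points of `Y`: `U` is the set
of common neighbours of `f` in `X`, with one point removed from each `t`-subset having fewer than
`m` common neighbours. -/
theorem exists_subset_forall_le_card_commonNeighbors {X Y : Finset α} (hY : Y.Nonempty) {c : Bool}
    {r t m u : ℕ} (ht : t ≠ 0)
    (h : #X ^ t * m ^ r + u * #Y ^ r ≤ ∑ x ∈ X, #(neighbors col c Y x) ^ r) :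
    ∃ U ⊆ X, u ≤ #U ∧ ∀ S ⊆ U, #S = t → m ≤ #(commonNeighbors col c Y S) := by
  set F := Fintype.piFinset fun _ : Fin r => Y
  set A : (Fin r → α) → Finset α := fun f => {x ∈ X | ∀ i, col x (f i) = c}
  set bad := {S ∈ X.powersetCard t | #(commonNeighbors col c Y S) < m}
  have hA : ∑ f ∈ F, #(A f) = ∑ x ∈ X, #(neighbors col c Y x) ^ r := by
    calc ∑ f ∈ F, #(A f) = ∑ x ∈ X, #{f ∈ F | ∀ i, col x (f i) = c} :=
          (sum_card_bipartiteAbove_eq_sum_card_bipartiteBelow _).symm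
      _ = _ := sum_congr rfl fun x _ => card_filter_piFinset_forall Y (col x · = c) r
  have hbad : ∑ f ∈ F, #{S ∈ bad | S ⊆ A f} ≤ #X ^ t * m ^ r := by
    calc ∑ f ∈ F, #{S ∈ bad | S ⊆ A f} = ∑ S ∈ bad, #{f ∈ F | S ⊆ A f} :=
          sum_card_bipartiteAbove_eq_sum_card_bipartiteBelow _
      _ = ∑ S ∈ bad, #(commonNeighbors col c Y S) ^ r := by
          refine sum_congr rfl fun S hS => ?_
          have hSX : S ⊆ X := (mem_powersetCard.1 (mem_filter.1 hS).1).1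
          rw [commonNeighbors, ← card_filter_piFinset_forall]
          congr 1
          refine filter_congr fun f _ => ?_
          simp only [A, subset_iff, mem_filter]
          exact ⟨fun hf i x hx => (hf hx).2 i, fun hf x hx => ⟨hSX hx, fun i => hf i x hx⟩⟩
      _ ≤ ∑ _S ∈ bad, m ^ r :=
          sum_le_sum fun S hS => Nat.pow_le_pow_left (mem_filter.1 hS).2.le r
      _ ≤ #X ^ t * m ^ r := by
          rw [sum_const, smul_eq_mul]
          gcongr
          exact (card_filter_le _ _).trans
            ((card_powersetCard t X).trans_le (Nat.choose_le_pow _ _))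
  obtain ⟨f, -, hf⟩ : ∃ f ∈ F, #{S ∈ bad | S ⊆ A f} + u ≤ #(A f) := by
    refine exists_le_of_sum_le (Fintype.piFinset_nonempty.2 fun _ => hY) ?_
    rw [sum_add_distrib, sum_const, smul_eq_mul, Fintype.card_piFinset_const, hA]
    linarith [mul_comm (#Y ^ r) u]
  obtain ⟨R, hR, hRbad⟩ := exists_card_le_forall_not_disjoint {S ∈ bad | S ⊆ A f}
    fun S hS => card_pos.1 <| by
      rw [(mem_powersetCard.1 (mem_filter.1 (mem_filter.1 hS).1).1).2]; exact Nat.pos_of_ne_zero ht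
  refine ⟨A f \ R, sdiff_subset.trans (filter_subset _ _), ?_, fun S hSU hSt => ?_⟩
  · have := le_card_sdiff R (A f)
    omega
  · by_contra! hlt
    have hSA : S ⊆ A f := hSU.trans sdiff_subset
    refine hRbad S (mem_filter.2 ⟨mem_filter.2 ⟨mem_powersetCard.2 ⟨hSA.trans (filter_subset _ _),
      hSt⟩, hlt⟩, hSA⟩) ?_
    exact disjoint_sdiff.mono_right hSU

theorem exists_subset_forall_le_card_commonNeighbors_of_sum {X Y : Finset α} (hX : X.Nonempty)
    (hY : Y.Nonempty) {c : Bool} {r t m u : ℕ} (ht : t ≠ 0)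
    (h : #X ^ r * (#X ^ t * m ^ r + u * #Y ^ r) ≤ #X * (∑ x ∈ X, #(neighbors col c Y x)) ^ r) :
    ∃ U ⊆ X, u ≤ #U ∧ ∀ S ⊆ U, #S = t → m ≤ #(commonNeighbors col c Y S) :=
  exists_subset_forall_le_card_commonNeighbors hY ht <| Nat.le_of_mul_le_mul_left
    (h.trans (card_mul_pow_sum_le X _ r)) (pow_pos hX.card_pos r)

lemma HasMonoClique.hasBlockPattern {c₁ c₂ c : Bool} {t : ℕ} {Y S : Finset α}
    (hT : HasMonoClique col c₂ t (commonNeighbors col c Y S \ S)) (hS : IsMonoClique col c₁ S)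
    (hSt : #S = t) (hc : ¬(c₁ = c₂ ∧ c₂ = c)) : HasBlockPattern col t :=
  let ⟨T, hTS, hTt, hT⟩ := hT
  ⟨S, T, c₁, c₂, c, disjoint_sdiff.mono_right hTS, hSt, hTt, hc, hS, hT,
    fun u hu _ hv => (mem_filter.1 (mem_sdiff.1 (hTS hv)).1).2 u hu⟩

lemma hasBlockPattern_of_four_pow_le (hsym : ∀ u v, col u v = col v u) {c : Bool} {t : ℕ}
    {Y S : Finset α} (hS : IsMonoClique col (!c) S) (hSt : #S = t)
    (hN : 4 ^ t ≤ #(commonNeighbors col c Y S \ S)) : HasBlockPattern col t := by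
  rcases hasMonoClique_or_of_four_pow_le hsym c hN with hT | hT <;>
    exact hT.hasBlockPattern hS hSt (by simp)

-- `#X = #Y = x`, `r = 4t`, `m = 2^{12t}`, `u = 4^t`, and the degrees average `2εx`.
lemma dependentRandomChoice_bound_of_density {ε x : ℝ} {t : ℕ} (hε0 : 0 < ε) (hε : ε ≤ 1 / 2)
    (ht : 1 ≤ t) (hx : (1 / ε) ^ (16 * t) ≤ x) :
    x ^ t * (2 ^ (12 * t)) ^ (4 * t) + 4 ^ t * x ^ (4 * t) ≤ x * (2 * ε * x) ^ (4 * t) := by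
  have hβ : 2 ≤ 1 / ε := by rw [le_div_iff₀ hε0]; linarith
  have hx0 : 0 ≤ x := le_trans (by positivity) hx
  have hεx : 1 ≤ ε ^ (4 * t) * x := by
    calc (1 : ℝ) = ε ^ (4 * t) * (1 / ε) ^ (4 * t) := by
          rw [← mul_pow, mul_one_div_cancel hε0.ne', one_pow]
      _ ≤ ε ^ (4 * t) * (1 / ε) ^ (16 * t) := by
          gcongr
          · linarith
          · omega
      _ ≤ ε ^ (4 * t) * x := by gcongr
  have hx3 : ((2 : ℝ) ^ (12 * t)) ^ (4 * t) ≤ x ^ (3 * t) := by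
    calc ((2 : ℝ) ^ (12 * t)) ^ (4 * t) = (2 ^ (16 * t)) ^ (3 * t) := by
          rw [← pow_mul, ← pow_mul]; ring_nf
      _ ≤ ((1 / ε) ^ (16 * t)) ^ (3 * t) := by gcongr
      _ ≤ x ^ (3 * t) := by gcongr
  have h16 : (1 : ℝ) + 4 ^ t ≤ 16 ^ t := by
    have h4 : (4 : ℝ) ≤ 4 ^ t := le_self_pow₀ (by norm_num) (by omega)
    calc (1 : ℝ) + 4 ^ t ≤ 4 ^ t * 4 ^ t := by nlinarith
      _ = 16 ^ t := by rw [← mul_pow]; norm_num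
  calc x ^ t * (2 ^ (12 * t)) ^ (4 * t) + 4 ^ t * x ^ (4 * t)
      ≤ x ^ t * x ^ (3 * t) + 4 ^ t * x ^ (4 * t) := by gcongr
    _ = (1 + 4 ^ t) * x ^ (4 * t) := by ring
    _ ≤ 16 ^ t * (ε ^ (4 * t) * x) * x ^ (4 * t) := by
        gcongr
        calc (1 : ℝ) + 4 ^ t ≤ 16 ^ t := h16
          _ ≤ 16 ^ t * (ε ^ (4 * t) * x) := le_mul_of_one_le_right (by positivity) hεx
    _ = x * (2 * ε * x) ^ (4 * t) := by
        rw [show (16 : ℝ) ^ t = 2 ^ (4 * t) by rw [pow_mul]; norm_num]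
        ring

theorem hasBlockPattern_or_exists_not_hasMonoClique [Fintype α]
    (hsym : ∀ u v, col u v = col v u) {ε : ℝ} (hε0 : 0 < ε) (hε : ε ≤ 1 / 2) {t : ℕ} (ht : 1 ≤ t)
    (hn : (1 / ε) ^ (16 * t) ≤ Fintype.card α) (c : Bool)
    (hc : 2 * ε * Fintype.card α ^ 2 ≤ ((∑ x, #(neighbors col c univ x) : ℕ) : ℝ)) :
    HasBlockPattern col t ∨ ∃ F : Finset α, 2 ^ (11 * t) ≤ #F ∧ ¬HasMonoClique col (!c) t F := by
  set n := Fintype.card α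
  have hn0 : (0 : ℝ) < n := lt_of_lt_of_le (by positivity) hn
  have huniv : (univ : Finset α).Nonempty :=
    univ_nonempty_iff.2 (Fintype.card_pos_iff.1 (by exact_mod_cast hn0))
  obtain ⟨U, -, hU, hUS⟩ := exists_subset_forall_le_card_commonNeighbors_of_sum (r := 4 * t)
    (t := t) (m := 2 ^ (12 * t)) (u := 4 ^ t) (c := c) huniv huniv (by omega) <| by
      rw [card_univ]
      exact_mod_cast calc
        (n : ℝ) ^ (4 * t) * (n ^ t * (2 ^ (12 * t)) ^ (4 * t) + 4 ^ t * n ^ (4 * t))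
          ≤ n ^ (4 * t) * (n * (2 * ε * n) ^ (4 * t)) := by
            gcongr
            exact dependentRandomChoice_bound_of_density hε0 hε ht hn
        _ = n * (2 * ε * n ^ 2) ^ (4 * t) := by ring
        _ ≤ n * ((∑ x, #(neighbors col c univ x) : ℕ) : ℝ) ^ (4 * t) := by gcongr
  have hN : ∀ S ⊆ U, #S = t → 2 ^ (12 * t) ≤ #(commonNeighbors col c univ S \ S) + t :=
    fun S hSU hSt => hSt ▸ (hUS S hSU hSt).trans card_le_card_sdiff_add_card
  have htt := Nat.lt_two_pow_self (n := t)
  have h4 := two_pow_add_two_pow_le (show 2 * t < 12 * t by omega) (show t < 12 * t by omega)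
  have h11 := two_pow_add_two_pow_le (show 11 * t < 12 * t by omega) (show t < 12 * t by omega)
  rw [pow_mul 2 2, show (2 : ℕ) ^ 2 = 4 by rfl] at h4
  rcases hasMonoClique_or_of_four_pow_le hsym (!c) hU with ⟨S, hSU, hSt, hS⟩ | ⟨S, hSU, hSt, hS⟩
  · have := hN S hSU hSt
    exact .inl (hasBlockPattern_of_four_pow_le (Y := univ) hsym hS hSt (by omega))
  · rw [Bool.not_not] at hS
    by_cases hF : HasMonoClique col (!c) t (commonNeighbors col c univ S \ S)
    · exact .inl (hF.hasBlockPattern hS hSt (by simp))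
    · exact .inr ⟨_, by have := hN S hSU hSt; omega, hF⟩

-- `#W = #Z = 2^{9t}`, `r = 2t`, `m = u = 4^t`; the factor `2^{2t}` pays for density `1/2`.
lemma dependentRandomChoice_bound_two_pow {t : ℕ} (ht : 1 ≤ t) :
    2 ^ (2 * t) * ((2 ^ (9 * t)) ^ (2 * t) *
      ((2 ^ (9 * t)) ^ t * (4 ^ t) ^ (2 * t) + 4 ^ t * (2 ^ (9 * t)) ^ (2 * t))) ≤
    2 ^ (9 * t) * (2 ^ (9 * t) * 2 ^ (9 * t)) ^ (2 * t) := by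
  simp only [show (4 : ℕ) = 2 ^ 2 by norm_num, ← pow_mul, ← pow_add, mul_add]
  apply two_pow_add_two_pow_le <;> nlinarith

theorem hasBlockPattern_of_dense_of_not_hasMonoClique (hsym : ∀ u v, col u v = col v u) {c : Bool}
    {t : ℕ} (ht : 1 ≤ t) {W Z : Finset α} (hWZ : Disjoint W Z) (hW : #W = 2 ^ (9 * t))
    (hZ : #Z = 2 ^ (9 * t))
    (hdense : 2 ^ (9 * t) * 2 ^ (9 * t) ≤ 2 * ∑ x ∈ W, #(neighbors col c Z x))
    (hWc : ¬HasMonoClique col c t W) : HasBlockPattern col t := by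
  have hpos : 0 < 2 ^ (9 * t) := Nat.two_pow_pos _
  obtain ⟨U, hUW, hU, hUS⟩ := exists_subset_forall_le_card_commonNeighbors_of_sum (r := 2 * t)
    (t := t) (m := 4 ^ t) (u := 4 ^ t) (c := c) (card_pos.1 (hW ▸ hpos)) (card_pos.1 (hZ ▸ hpos))
    (by omega) <| by
      rw [hW, hZ]
      refine Nat.le_of_mul_le_mul_left ((dependentRandomChoice_bound_two_pow ht).trans ?_)
        (Nat.two_pow_pos (2 * t))
      calc 2 ^ (9 * t) * (2 ^ (9 * t) * 2 ^ (9 * t)) ^ (2 * t)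
          ≤ 2 ^ (9 * t) * (2 * ∑ x ∈ W, #(neighbors col c Z x)) ^ (2 * t) := by gcongr
        _ = 2 ^ (2 * t) * (2 ^ (9 * t) * (∑ x ∈ W, #(neighbors col c Z x)) ^ (2 * t)) := by ring
  obtain ⟨S, hSU, hSt, hS⟩ :=
    (hasMonoClique_or_of_four_pow_le hsym c hU).resolve_left fun h => hWc (h.mono hUW)
  refine hasBlockPattern_of_four_pow_le (Y := Z) hsym hS hSt ?_
  rw [sdiff_eq_self_of_disjoint (s := commonNeighbors col c Z S)
    (hWZ.mono (hSU.trans hUW) (filter_subset _ _)).symm]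
  exact hUS S hSU hSt

theorem hasBlockPattern_of_not_hasMonoClique (hsym : ∀ u v, col u v = col v u) (c : Bool) {t : ℕ}
    (ht : 1 ≤ t) {F₁ F₂ : Finset α} (h₁ : 2 ^ (11 * t) ≤ #F₁) (h₂ : 2 ^ (11 * t) ≤ #F₂)
    (hF₁ : ¬HasMonoClique col (!c) t F₁) (hF₂ : ¬HasMonoClique col c t F₂) :
    HasBlockPattern col t := by
  have hI : #(F₁ ∩ F₂) < 4 ^ t := by
    by_contra! h
    rcases hasMonoClique_or_of_four_pow_le hsym c h with h | h
    · exact hF₂ (h.mono inter_subset_right)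
    · exact hF₁ (h.mono inter_subset_left)
  have h9 := two_pow_add_two_pow_le (show 9 * t < 11 * t by omega) (show 2 * t < 11 * t by omega)
  rw [pow_mul 2 2, show (2 : ℕ) ^ 2 = 4 by rfl] at h9
  obtain ⟨X, hX, hXcard⟩ := exists_subset_card_eq (s := F₁ \ F₂) (n := 2 ^ (9 * t)) <| by
    have := card_sdiff_add_card_inter F₁ F₂
    omega
  obtain ⟨Y, hY, hYcard⟩ := exists_subset_card_eq (s := F₂ \ F₁) (n := 2 ^ (9 * t)) <| by
    have := card_sdiff_add_card_inter F₂ F₁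
    rw [inter_comm] at this
    omega
  have hXY : Disjoint X Y := disjoint_sdiff_sdiff.mono hX hY
  have hsplit : ∑ x ∈ X, #(neighbors col c Y x) + ∑ x ∈ X, #(neighbors col (!c) Y x) =
      2 ^ (9 * t) * 2 ^ (9 * t) := by
    simp only [← sum_add_distrib, card_neighbors_add_card_neighbors_not, sum_const, smul_eq_mul,
      hXcard, hYcard]
  rcases (by omega : 2 ^ (9 * t) * 2 ^ (9 * t) ≤ 2 * ∑ x ∈ X, #(neighbors col c Y x) ∨
      2 ^ (9 * t) * 2 ^ (9 * t) ≤ 2 * ∑ x ∈ X, #(neighbors col (!c) Y x)) with h | h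
  · rw [sum_card_neighbors_comm hsym] at h
    exact hasBlockPattern_of_dense_of_not_hasMonoClique hsym ht hXY.symm hYcard hXcard h
      fun h => hF₂ (h.mono (hY.trans sdiff_subset))
  · exact hasBlockPattern_of_dense_of_not_hasMonoClique hsym ht hXY hXcard hYcard h
      fun h => hF₁ (h.mono (hX.trans sdiff_subset))

end TwoColoring

open TwoColoring in
/-- Theorem of Fox–Sudakov and Cutler–Montágh on globally balanced
2-colourings. Edges are counted as ordered pairs `p` with `p.1 < p.2`. -/
theorem stmt_3 (ε : ℝ) (hε0 : 0 < ε) (hε : ε ≤ 1/2) (t : ℕ) (ht : 1 ≤ t)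
    (n : ℕ) (hn : (1/ε) ^ (16 * t) ≤ (n : ℝ))
    (col : Fin n → Fin n → Bool) (hsym : ∀ u v, col u v = col v u)
    (hbal : ∀ c : Bool,
      ε * n ^ 2 ≤
        (((univ : Finset (Fin n × Fin n)).filter
          fun p => p.1 < p.2 ∧ col p.1 p.2 = c).card : ℝ)) :
    ∃ (S T : Finset (Fin n)) (c₁ c₂ c₃ : Bool),
      Disjoint S T ∧ S.card = t ∧ T.card = t ∧
      ¬(c₁ = c₂ ∧ c₂ = c₃) ∧
      (∀ u ∈ S, ∀ v ∈ S, u ≠ v → col u v = c₁) ∧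
      (∀ u ∈ T, ∀ v ∈ T, u ≠ v → col u v = c₂) ∧
      (∀ u ∈ S, ∀ v ∈ T, col u v = c₃) := by
  rw [← Fintype.card_fin n] at hn
  have hdense (c : Bool) :
      2 * ε * Fintype.card (Fin n) ^ 2 ≤ ((∑ x, #(neighbors col c univ x) : ℕ) : ℝ) := by
    have := two_mul_card_lt_le_sum_card_neighbors hsym c
    rw [Fintype.card_fin]
    calc 2 * ε * n ^ 2 ≤ 2 * (#{p : Fin n × Fin n | p.1 < p.2 ∧ col p.1 p.2 = c} : ℝ) := by
          linarith [hbal c]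
      _ ≤ _ := by exact_mod_cast this
  rcases hasBlockPattern_or_exists_not_hasMonoClique hsym hε0 hε ht hn true (hdense true) with
    h | ⟨F₁, h₁, hF₁⟩
  · exact h
  rcases hasBlockPattern_or_exists_not_hasMonoClique hsym hε0 hε ht hn false (hdense false) with
    h | ⟨F₂, h₂, hF₂⟩
  · exact h
  exact hasBlockPattern_of_not_hasMonoClique hsym true ht h₁ h₂ hF₁ hF₂
end

section
/- Let A and B be disjoint finite sets with |A| > 2 and |B| > 2, and let every pair (a, b) with a ∈ A, b ∈ B be coloured red or blue, in such a way that every vertex of A has at least one blue neighbour in B and every vertex of B has at least one red neighbour in A. Then there exist a, a' ∈ A and b, b' ∈ B with a ≠ a', b ≠ b', such that the pairs ab and a'b' are red and the pairs ab' and a'b are blue (an alternating red–blue 4-cycle). -/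
open Finset

/-- Proposition 2.3: a 2-coloured complete bipartite graph with parts of
size > 2, where every vertex of A has a blue neighbour and every vertex of B has a red
neighbour, contains an alternating red–blue 4-cycle. Colour `true` is red, `false` blue. -/
theorem stmt_6 {V : Type*} [DecidableEq V] (A B : Finset V) (hAB : Disjoint A B)
    (hA : 2 < A.card) (hB : 2 < B.card)
    (col : V → V → Bool)
    (hblue : ∀ a ∈ A, ∃ b ∈ B, col a b = false)
    (hred : ∀ b ∈ B, ∃ a ∈ A, col a b = true) :
    ∃ a ∈ A, ∃ a' ∈ A, ∃ b ∈ B, ∃ b' ∈ B,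
      a ≠ a' ∧ b ≠ b' ∧
      col a b = true ∧ col a' b' = true ∧ col a b' = false ∧ col a' b = false := by
  set R : V → Finset V := fun b => A.filter (fun a => col a b = true) with hR
  have hBne : B.Nonempty := card_pos.mp (by omega)
  obtain ⟨b, hbB, hbmin⟩ := B.exists_min_image (fun b => (R b).card) hBne
  obtain ⟨a, haA, hab⟩ := hred b hbB
  obtain ⟨b', hb'B, hab'⟩ := hblue a haA
  have hbb' : b ≠ b' := fun h => by simp [h, hab'] at hab
  by_cases h : ∃ a' ∈ A, col a' b' = true ∧ col a' b = false
  · obtain ⟨a', ha'A, h1, h2⟩ := h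
    exact ⟨a, haA, a', ha'A, b, hbB, b', hb'B,
      fun h => by simp [h, h2] at hab, hbb', hab, h1, hab', h2⟩
  · push_neg at h
    have hsub : R b' ⊆ R b := by
      intro x hx
      simp only [hR, mem_filter] at hx ⊢
      refine ⟨hx.1, ?_⟩
      have := h x hx.1 hx.2
      cases hxb : col x b with
      | true => rfl
      | false => exact absurd hxb this
    have hne : a ∈ R b ∧ a ∉ R b' := by
      constructor
      · simp [hR, haA, hab]
      · simp [hR, haA, hab']
    have hlt : (R b').card < (R b).card :=
      card_lt_card (ssubset_of_subset_of_ne hsub (fun h => hne.2 (h ▸ hne.1)))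
    exact absurd (hbmin b' hb'B) (by omega)
end

section
/- For every real ε ∈ (0, 1/2) and every integer r ≥ 2 with ε·r ≤ 1, setting C = (80/ε)·log₂(1/ε), the following holds for all sufficiently large n. For every r-edge-colouring of the complete graph K_n that is locally ε-balanced, there exists an integer k with 1 ≤ k ≤ C such that at least (1/4)·(n choose k) of the k-element vertex subsets S have the property that every vertex of S is incident, within S, to edges of all r colours. -/
open Finset

set_option maxHeartbeats 1000000 in
/-- Claim 4.3: in a locally ε-balanced r-colouring of K_n (n large) there
is some k ≤ C = (80/ε)·log₂(1/ε) such that at least a quarter of all k-element vertex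
subsets induce a unibalanced subgraph. -/
theorem stmt_14 (ε : ℝ) (hε0 : 0 < ε) (hε : ε < 1/2)
    (r : ℕ) (hr : 2 ≤ r) (hεr : ε * r ≤ 1) :
    ∃ N : ℕ, ∀ n : ℕ, N ≤ n →
      ∀ col : Fin n → Fin n → Fin r,
        (∀ u v, col u v = col v u) →
        (∀ (v : Fin n) (c : Fin r),
          ε * n ≤ ((univ.filter fun u => u ≠ v ∧ col v u = c).card : ℝ)) →
        ∃ k : ℕ, 1 ≤ k ∧ (k : ℝ) ≤ (80 / ε) * Real.logb 2 (1/ε) ∧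
          (1/4 : ℝ) * (n.choose k) ≤
            (((Finset.powersetCard k (univ : Finset (Fin n))).filter fun S =>
              ∀ v ∈ S, ∀ c : Fin r, ∃ u ∈ S, u ≠ v ∧ col v u = c).card : ℝ) := by
  -- ============ scalar setup ============
  have hε1 : (2:ℝ) < 1/ε := by rw [lt_div_iff₀ hε0]; linarith
  set L := Real.logb 2 (1/ε) with hLdef
  have hlogpos : 0 < Real.log (1/ε) := Real.log_pos (by linarith)
  have hlogle : Real.log (1/ε) ≤ 1/ε :=
    le_trans (Real.log_le_sub_one_of_pos (by positivity)) (by linarith)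
  have hlog2pos : (0:ℝ) < Real.log 2 := Real.log_pos one_lt_two
  have hlog2le : Real.log 2 ≤ 1 :=
    le_trans (Real.log_le_sub_one_of_pos (by norm_num)) (by norm_num)
  have hL : L = Real.log (1/ε) / Real.log 2 := by rw [hLdef, Real.logb]
  have hLge : Real.log (1/ε) ≤ L := by rw [hL, le_div_iff₀ hlog2pos]; nlinarith
  have hL1 : 1 ≤ L := by
    have h2 : Real.log 2 ≤ Real.log (1/ε) := Real.log_le_log (by norm_num) (by linarith)
    rw [hL, le_div_iff₀ hlog2pos]; linarith
  have hLeps : L ≤ 2 / ε := by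
    have hlog2ge : (1/2:ℝ) ≤ Real.log 2 := by have := Real.log_two_gt_d9; linarith
    have hLle2 : L ≤ 2 * Real.log (1/ε) := by rw [hL, div_le_iff₀ hlog2pos]; nlinarith
    calc L ≤ 2 * Real.log (1/ε) := hLle2
    _ ≤ 2 * (1/ε) := by linarith
    _ = 2/ε := by ring
  have hLεle2 : L * ε ≤ 2 := (le_div_iff₀ hε0).1 hLeps
  set k := ⌈40 * L / ε⌉₊ with hkdef
  have h40pos : (0:ℝ) < 40 * L / ε := by positivity
  have hk1 : 1 ≤ k := Nat.one_le_iff_ne_zero.2 (Nat.ceil_pos.2 h40pos).ne'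
  have hklb : 40 * L / ε ≤ (k:ℝ) := Nat.le_ceil _
  have hεL1 : 1 ≤ L / ε := by rw [le_div_iff₀ hε0]; nlinarith
  have hkub : (k:ℝ) ≤ 40 * L / ε + 1 := (Nat.ceil_lt_add_one h40pos.le).le
  have hkC : (k:ℝ) ≤ 80 / ε * L := by
    have h1 : (1:ℝ) ≤ 40 * (L/ε) := by nlinarith
    have h2 : 40 * L / ε = 40 * (L/ε) := by ring
    have h3 : 80 / ε * L = 80 * (L/ε) := by ring
    rw [h3]; rw [h2] at hkub; linarith
  have hk160 : (k:ℝ) ≤ 160 / ε^2 := by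
    have h1 : 40 * L / ε ≤ 80 / ε^2 := by
      rw [div_le_div_iff₀ hε0 (by positivity)]
      nlinarith [mul_le_mul_of_nonneg_right hLεle2 hε0.le]
    have h2 : (1:ℝ) ≤ 80 / ε^2 := by
      rw [le_div_iff₀ (by positivity)]; nlinarith
    rw [show (160:ℝ)/ε^2 = 80/ε^2 + 80/ε^2 by ring]; linarith [hkub, h1, h2]
  have hrle : (r:ℝ) ≤ 1/ε := by rw [le_div_iff₀ hε0]; linarith [hεr]
  set j := k - 1 with hjdef
  have hjcast : (j:ℝ) = (k:ℝ) - 1 := by rw [hjdef, Nat.cast_sub hk1]; norm_num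
  have hjlb : 39 * L / ε ≤ (j:ℝ) := by
    rw [hjcast]
    have h : 40 * L / ε = 39 * L/ε + L/ε := by ring
    rw [h] at hklb; linarith
  have hεj : 12 * Real.log (1/ε) ≤ ε/2 * j := by
    have h2 : ε/2 * (39 * L / ε) ≤ ε/2 * j := mul_le_mul_of_nonneg_left hjlb (by linarith)
    have h1 : ε/2 * (39 * L / ε) = 39/2 * L := by field_simp
    rw [h1] at h2; linarith
  have hpow : (1 - ε/2)^j ≤ ε^12 := by
    have e1 : (1-ε/2:ℝ) ≤ Real.exp (-(ε/2)) := by linarith [Real.add_one_le_exp (-(ε/2))]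
    have e2 : Real.exp (12 * Real.log ε) = ε^(12:ℕ) := by
      have := Real.exp_nat_mul (Real.log ε) 12
      push_cast at this
      rw [this, Real.exp_log hε0]
    calc (1 - ε/2)^j ≤ Real.exp (-(ε/2))^j := pow_le_pow_left₀ (by linarith) e1 j
    _ = Real.exp (↑j * -(ε/2)) := by rw [← Real.exp_nat_mul]
    _ ≤ Real.exp (12 * Real.log ε) := by
        apply Real.exp_le_exp.2
        have hle : Real.log ε = -Real.log (1/ε) := by rw [one_div, Real.log_inv, neg_neg]
        rw [hle]; nlinarith [hεj]
    _ = ε^12 := e2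
  have hkey : (r:ℝ) * k * (1 - ε/2)^j ≤ 3/4 := by
    have hpowpos : (0:ℝ) ≤ (1-ε/2)^j := pow_nonneg (by linarith) _
    have hrk : (r:ℝ) * k ≤ 160 / ε^3 := by
      calc (r:ℝ) * k ≤ (1/ε) * (160/ε^2) := by
            apply mul_le_mul hrle hk160 (by positivity) (by positivity)
      _ = 160/ε^3 := by field_simp
    have h9 : ε^9 ≤ (1/2:ℝ)^9 := pow_le_pow_left₀ hε0.le hε.le 9
    calc (r:ℝ) * k * (1 - ε/2)^j ≤ (160/ε^3) * ε^12 := by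
          apply mul_le_mul hrk hpow hpowpos (by positivity)
    _ = 160 * ε^9 := by field_simp
    _ ≤ 160 * (1/2)^9 := by nlinarith
    _ ≤ 3/4 := by norm_num
  -- ============ choose N, take n ============
  refine ⟨⌈320/ε^3⌉₊ + 6, ?_⟩
  intro n hn col hsym hbal
  have hn6 : 6 ≤ n := by omega
  have hnge : 320/ε^3 ≤ (n:ℝ) := by
    refine le_trans (Nat.le_ceil _) ?_
    exact_mod_cast Nat.cast_le.2 (by omega : ⌈320/ε^3⌉₊ ≤ n)
  have hεn0 : (0:ℝ) ≤ ε * n := by positivity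
  have hkεn : (k:ℝ) ≤ ε * n / 2 := by
    have h1 : ε * (320/ε^3) ≤ ε * n := mul_le_mul_of_nonneg_left hnge hε0.le
    have h2 : ε * (320/ε^3) = 320/ε^2 := by field_simp
    rw [h2] at h1
    have h3 : (160:ℝ)/ε^2 = (320/ε^2)/2 := by ring
    rw [h3] at hk160
    linarith [hk160]
  have hεn2 : ε * n < (n:ℝ)/2 := by
    have hn0 : (0:ℝ) < n := by positivity
    nlinarith
  have hkn : k ≤ n := by
    have : (k:ℝ) ≤ (n:ℝ) := by linarith
    exact_mod_cast this
  set A' := ⌈ε * n⌉₊ with hA'def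
  have hA'ub : (A':ℝ) ≤ ε * n + 1 := (Nat.ceil_lt_add_one hεn0).le
  have hA'lb : ε * n ≤ (A':ℝ) := Nat.le_ceil _
  have hMn : A' + 2 ≤ n := by
    have hcast : ((A' + 2 : ℕ):ℝ) ≤ (n:ℝ) := by
      push_cast
      have : (6:ℝ) ≤ n := by exact_mod_cast hn6
      linarith
    exact_mod_cast hcast
  set M := n - 1 - A' with hMdef
  have hMcast : (M:ℝ) = (n:ℝ) - 1 - A' := by
    rw [hMdef, Nat.cast_sub (by omega), Nat.cast_sub (by omega)]
    norm_num
  have hM_le : (M:ℝ) ≤ (1-ε/2)*((n:ℝ)-(j:ℝ)) := by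
    have hjk : (j:ℝ) ≤ (k:ℝ) := by rw [hjcast]; linarith
    have hj0 : (0:ℝ) ≤ (j:ℝ) := Nat.cast_nonneg _
    rw [hMcast]
    nlinarith [hA'lb, hkεn, hε0.le, mul_nonneg hε0.le hj0]
  -- ============ counting the bad sets ============
  set P := Finset.powersetCard k (univ : Finset (Fin n)) with hPdef
  have hbadcount :
      (P.filter fun S =>
        ¬ ∀ v ∈ S, ∀ c : Fin r, ∃ u ∈ S, u ≠ v ∧ col v u = c).card
      ≤ n * r * (M.choose j) := by
    have key : ∀ (v : Fin n) (c : Fin r),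
        (P.filter fun S => v ∈ S ∧ ∀ u ∈ S, ¬(u ≠ v ∧ col v u = c)).card ≤ M.choose j := by
      intro v c
      set A := (univ.filter fun u => u ≠ v ∧ col v u = c) with hAdef
      have hvA : v ∉ A := by simp [hAdef]
      set T := (univ : Finset (Fin n)) \ insert v A with hTdef
      have hTcard : T.card = n - (A.card + 1) := by
        rw [hTdef, card_sdiff_of_subset (subset_univ _), card_univ, Fintype.card_fin,
          card_insert_of_notMem hvA]
      have hmaps : ∀ S ∈ (P.filter fun S => v ∈ S ∧ ∀ u ∈ S, ¬(u ≠ v ∧ col v u = c)),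
          S.erase v ∈ Finset.powersetCard j T := by
        intro S hS
        simp only [mem_filter, hPdef, Finset.mem_powersetCard] at hS
        obtain ⟨⟨hSsub, hScard⟩, hvS, hprop⟩ := hS
        rw [Finset.mem_powersetCard]
        constructor
        · intro u hu
          rw [mem_erase] at hu
          obtain ⟨huv, huS⟩ := hu
          rw [hTdef, mem_sdiff]
          refine ⟨mem_univ _, ?_⟩
          rw [mem_insert]
          push_neg
          refine ⟨huv, ?_⟩
          intro huA
          rw [hAdef, mem_filter] at huA
          exact hprop u huS ⟨huA.2.1, huA.2.2⟩
        · rw [card_erase_of_mem hvS, hScard]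
      have hinj : Set.InjOn (fun S : Finset (Fin n) => S.erase v)
          ↑(P.filter fun S => v ∈ S ∧ ∀ u ∈ S, ¬(u ≠ v ∧ col v u = c)) := by
        intro S1 h1 S2 h2 he
        simp only [coe_filter, Set.mem_setOf_eq] at h1 h2
        simp only [] at he
        have : insert v (S1.erase v) = insert v (S2.erase v) := by rw [he]
        rwa [Finset.insert_erase h1.2.1, Finset.insert_erase h2.2.1] at this
      have hcard := Finset.card_le_card_of_injOn _ hmaps hinj
      refine hcard.trans ?_
      rw [Finset.card_powersetCard]
      apply Nat.choose_le_choose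
      have hA : A' ≤ A.card := Nat.ceil_le.2 (hbal v c)
      omega
    have hbadsub : (P.filter fun S => ¬ ∀ v ∈ S, ∀ c : Fin r, ∃ u ∈ S, u ≠ v ∧ col v u = c)
        ⊆ (univ : Finset (Fin n × Fin r)).biUnion
            (fun p => P.filter fun S => p.1 ∈ S ∧ ∀ u ∈ S, ¬(u ≠ p.1 ∧ col p.1 u = p.2)) := by
      intro S hS
      simp only [mem_filter] at hS
      obtain ⟨hSP, hbad⟩ := hS
      push_neg at hbad
      obtain ⟨v, hv, c, hc⟩ := hbad
      refine mem_biUnion.2 ⟨(v, c), mem_univ _, ?_⟩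
      simp only [mem_filter]
      refine ⟨hSP, hv, fun u hu h => (hc u hu h.1) h.2⟩
    calc (P.filter fun S => ¬ ∀ v ∈ S, ∀ c : Fin r, ∃ u ∈ S, u ≠ v ∧ col v u = c).card
        ≤ ((univ : Finset (Fin n × Fin r)).biUnion
            (fun p => P.filter fun S => p.1 ∈ S ∧ ∀ u ∈ S, ¬(u ≠ p.1 ∧ col p.1 u = p.2))).card :=
          Finset.card_le_card hbadsub
      _ ≤ ∑ p : Fin n × Fin r,
            (P.filter fun S => p.1 ∈ S ∧ ∀ u ∈ S, ¬(u ≠ p.1 ∧ col p.1 u = p.2)).card :=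
          Finset.card_biUnion_le
      _ ≤ ∑ _p : Fin n × Fin r, M.choose j := Finset.sum_le_sum fun p _ => key p.1 p.2
      _ = n * r * M.choose j := by
          rw [Finset.sum_const, card_univ]
          simp [Fintype.card_prod, mul_assoc]
  -- ============ the main real inequality ============
  have hmainineq : ((n*r*(M.choose j) : ℕ):ℝ) ≤ 3/4 * (n.choose k) := by
    have hjn : j < n := by omega
    have hid : n * (n-1).choose j = n.choose k * k := by
      have h := Nat.add_one_mul_choose_eq (n-1) j
      have e1 : n - 1 + 1 = n := by omega
      have e2 : j + 1 = k := by omega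
      rwa [e1, e2] at h
    have hfact : (0:ℝ) < (Nat.factorial j : ℝ) := by
      exact_mod_cast Nat.factorial_pos j
    have hnj : ((n - j:ℕ):ℝ) = (n:ℝ) - j := by rw [Nat.cast_sub hjn.le]
    have hnjpos : (0:ℝ) ≤ (n:ℝ) - (j:ℝ) := by
      rw [← hnj]; exact Nat.cast_nonneg _
    have c1 : ((M.choose j:ℕ):ℝ) ≤ (M:ℝ)^j / (Nat.factorial j : ℝ) := by
      have := Nat.choose_le_pow_div (α := ℝ) j M
      push_cast at this ⊢
      convert this using 2
    have c2 : ((n:ℝ) - j)^j / (Nat.factorial j : ℝ) ≤ (((n-1).choose j : ℕ) : ℝ) := by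
      have h := Nat.pow_le_choose (α := ℝ) j (n-1)
      have e : n - 1 + 1 - j = n - j := by omega
      rw [e] at h
      rw [← hnj]
      push_cast at h ⊢
      exact h
    have hstep : (r:ℝ)*k*((M:ℝ)^j) ≤ 3/4 * ((n:ℝ)-j)^j := by
      have hMpow : (M:ℝ)^j ≤ ((1-ε/2)*((n:ℝ)-j))^j :=
        pow_le_pow_left₀ (Nat.cast_nonneg M) hM_le j
      calc (r:ℝ)*k*(M:ℝ)^j ≤ (r:ℝ)*k*((1-ε/2)^j*((n:ℝ)-j)^j) := by
            rw [mul_pow] at hMpow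
            exact mul_le_mul_of_nonneg_left hMpow (by positivity)
      _ = ((r:ℝ)*k*(1-ε/2)^j) * ((n:ℝ)-j)^j := by ring
      _ ≤ 3/4 * ((n:ℝ)-j)^j := mul_le_mul_of_nonneg_right hkey (pow_nonneg hnjpos j)
    have hmid : (r:ℝ)*k*(M.choose j) ≤ 3/4 * ((n-1).choose j) := by
      calc (r:ℝ)*k*(M.choose j) ≤ (r:ℝ)*k*((M:ℝ)^j/(Nat.factorial j:ℝ)) :=
            mul_le_mul_of_nonneg_left c1 (by positivity)
      _ = ((r:ℝ)*k*(M:ℝ)^j)/(Nat.factorial j:ℝ) := by ring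
      _ ≤ (3/4*((n:ℝ)-j)^j)/(Nat.factorial j:ℝ) := by gcongr
      _ = 3/4 * (((n:ℝ)-j)^j/(Nat.factorial j:ℝ)) := by ring
      _ ≤ 3/4 * ((n-1).choose j) := by
            apply mul_le_mul_of_nonneg_left c2 (by norm_num)
    have hkpos : (0:ℝ) < (k:ℝ) := by exact_mod_cast hk1
    have hfin : ((n*r*(M.choose j):ℕ):ℝ) * k ≤ (3/4 * (n.choose k:ℝ)) * k := by
      push_cast
      calc (n:ℝ)*r*(M.choose j)*k = ((r:ℝ)*k*(M.choose j))*n := by ring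
      _ ≤ (3/4*((n-1).choose j))*n := mul_le_mul_of_nonneg_right hmid (Nat.cast_nonneg n)
      _ = 3/4 * ((n:ℝ) * ((n-1).choose j)) := by ring
      _ = 3/4 * ((n.choose k:ℝ) * k) := by
            congr 1
            exact_mod_cast congrArg (fun x : ℕ => (x:ℝ)) hid
      _ = (3/4 * (n.choose k:ℝ))*k := by ring
    exact le_of_mul_le_mul_right hfin hkpos
  -- ============ conclusion ============
  refine ⟨k, hk1, hkC, ?_⟩
  have hPcard : P.card = n.choose k := by
    rw [hPdef, Finset.card_powersetCard, card_univ, Fintype.card_fin]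
  have hsplit :
      (P.filter fun S => ∀ v ∈ S, ∀ c : Fin r, ∃ u ∈ S, u ≠ v ∧ col v u = c).card
      + (P.filter fun S => ¬ ∀ v ∈ S, ∀ c : Fin r, ∃ u ∈ S, u ≠ v ∧ col v u = c).card
      = P.card := Finset.card_filter_add_card_filter_not _
  have hbadR : ((P.filter fun S =>
      ¬ ∀ v ∈ S, ∀ c : Fin r, ∃ u ∈ S, u ≠ v ∧ col v u = c).card : ℝ)
      ≤ 3/4 * (n.choose k) := by
    refine le_trans ?_ hmainineq
    exact_mod_cast Nat.cast_le.2 hbadcount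
  have hcastsplit : ((P.filter fun S =>
      ∀ v ∈ S, ∀ c : Fin r, ∃ u ∈ S, u ≠ v ∧ col v u = c).card : ℝ)
      + ((P.filter fun S =>
      ¬ ∀ v ∈ S, ∀ c : Fin r, ∃ u ∈ S, u ≠ v ∧ col v u = c).card : ℝ)
      = (n.choose k : ℝ) := by
    rw [← hPcard]
    exact_mod_cast congrArg (fun x : ℕ => (x:ℝ)) hsplit
  linarith
end

section
/- There is an absolute constant C > 0 such that the following holds for every real ε ∈ (0, 1/2] and every integer t ≥ 1. If n ≥ 2^{C·t/ε^{16}}, then every 2-edge-colouring of the complete graph K_n that is locally ε-balanced contains four pairwise disjoint t-element vertex sets A₁, A₂, A₃, A₄ such that all edges between A₁ and A₂ and all edges between A₃ and A₄ are red, while all edges between A₂ and A₃ and all edges between A₄ and A₁ are blue (a t-blow-up of an alternating 4-cycle). -/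
/-!
Call an ordered pair `(a, c)` rich if `R(a) ∩ B(c)` and `B(a) ∩ R(c)` both have at least
`ε²n/4` vertices (`R`, `B` the red and blue neighbourhoods). Among the vertices with few rich
partners take `u` with `|R(u)|` minimal: it sees `≥ (εn)²` paths `u–x–y` with `ux` red and `xy`
blue, while for `y` not rich with `u` minimality forces `|R(u) ∩ B(y)| ≤ |B(u) ∩ R(y)| + 1`.
Hence many vertices have many rich partners, and there are `≥ ε⁴n²/16` rich pairs.

Counting `t`-sets `B ⊆ R(a) ∩ B(c)` and `D ⊆ B(a) ∩ R(c)` over the rich pairs `(a, c)` gives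
one pair `(B, D)` shared by `≥ tn` rich pairs, hence by `t` vertices `a` and `t` vertices `c`.
These form `A₁` and `A₃`, with `A₂ = B` and `A₄ = D`.
-/

open Finset
open scoped Nat

section Counting

variable {α ι : Type*} [Fintype α] [DecidableEq α]

lemma sum_powersetCard_ite_subset (t : ℕ) (W : Finset α) :
    ∑ B ∈ powersetCard t (univ : Finset α), (if B ⊆ W then 1 else 0) = (#W).choose t := by
  rw [← card_filter, ← card_powersetCard]
  congr 1
  ext B
  simp only [mem_filter, mem_powersetCard, subset_univ, true_and]
  tauto

lemma sum_sum_card_filter_subset_subset (P : Finset ι) (U W : ι → Finset α) (t : ℕ) :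
    ∑ B ∈ powersetCard t univ, ∑ D ∈ powersetCard t univ, #{p ∈ P | B ⊆ U p ∧ D ⊆ W p}
      = ∑ p ∈ P, (#(U p)).choose t * (#(W p)).choose t := by
  simp_rw [← sum_powersetCard_ite_subset, sum_mul_sum, ite_zero_mul_ite_zero, mul_one,
    card_filter]
  conv_rhs => rw [Finset.sum_comm]
  exact sum_congr rfl fun B _ => Finset.sum_comm

lemma factorial_mul_choose_le_pow (n t : ℕ) : (t ! * n.choose t : ℝ) ≤ n ^ t := by
  rw [← le_div_iff₀' (by positivity)]
  exact Nat.choose_le_pow_div t n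

lemma half_pow_le_factorial_mul_choose {m t : ℕ} {r : ℝ} (htr : 2 * t ≤ r) (hrm : r ≤ m) :
    (r / 2) ^ t ≤ t ! * m.choose t := by
  have ht : (0 : ℝ) ≤ t := t.cast_nonneg
  have hm : (m : ℝ) / 2 ≤ (m + 1 - t : ℕ) := by
    rw [Nat.cast_sub (by exact_mod_cast (show (t : ℝ) ≤ m + 1 by linarith))]
    push_cast
    linarith
  calc (r / 2) ^ t ≤ ((m + 1 - t : ℕ) : ℝ) ^ t := by gcongr; linarith; linarith
    _ ≤ t ! * m.choose t := by
      rw [← div_le_iff₀' (by positivity)]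
      exact Nat.pow_le_choose t m

theorem exists_card_filter_subset_subset_ge (P : Finset ι) (hP : P.Nonempty)
    (U W : ι → Finset α) {t : ℕ} {r : ℝ} (htr : 2 * t ≤ r)
    (hU : ∀ p ∈ P, r ≤ #(U p)) (hW : ∀ p ∈ P, r ≤ #(W p)) :
    ∃ B D : Finset α, #B = t ∧ #D = t ∧
      #P * r ^ (2 * t) ≤ (2 * Fintype.card α) ^ (2 * t) * #{p ∈ P | B ⊆ U p ∧ D ⊆ W p} := by
  set K := powersetCard t (univ : Finset α)
  set N := Fintype.card α
  set f : Finset α × Finset α → ℕ := fun BD => #{p ∈ P | BD.1 ⊆ U p ∧ BD.2 ⊆ W p}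
  have hK : K.Nonempty := by
    obtain ⟨p, hp⟩ := hP
    have : (t : ℝ) ≤ N := calc
      (t : ℝ) ≤ r := by linarith [(t.cast_nonneg : (0 : ℝ) ≤ t)]
      _ ≤ #(U p) := hU p hp
      _ ≤ N := by exact_mod_cast card_le_univ (U p)
    rw [powersetCard_nonempty, card_univ]
    exact_mod_cast this
  obtain ⟨⟨B, D⟩, hBD, hmax⟩ := (K ×ˢ K).exists_max_image f (hK.product hK)
  obtain ⟨hB, hD⟩ := mem_product.1 hBD
  refine ⟨B, D, (mem_powersetCard.1 hB).2, (mem_powersetCard.1 hD).2, ?_⟩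
  have hsum : ∑ p ∈ P, (#(U p)).choose t * (#(W p)).choose t ≤ N.choose t ^ 2 * f (B, D) := by
    have := sum_le_card_nsmul (K ×ˢ K) f (f (B, D)) hmax
    rwa [sum_product, sum_sum_card_filter_subset_subset, card_product, card_powersetCard,
      card_univ, smul_eq_mul, ← sq] at this
  have hr : 0 ≤ r / 2 := by linarith [(t.cast_nonneg : (0 : ℝ) ≤ t)]
  have hlow : #P * (r / 2) ^ (2 * t) ≤
      ∑ p ∈ P, (t ! * (#(U p)).choose t : ℝ) * (t ! * (#(W p)).choose t) := by
    rw [← nsmul_eq_mul, two_mul, pow_add]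
    exact card_nsmul_le_sum _ _ _ fun p hp => mul_le_mul
      (half_pow_le_factorial_mul_choose htr (hU p hp))
      (half_pow_le_factorial_mul_choose htr (hW p hp)) (pow_nonneg hr _) (by positivity)
  have hup : (t ! * N.choose t : ℝ) ^ 2 ≤ N ^ (2 * t) := by
    rw [mul_comm 2 t, pow_mul]
    gcongr
    exact factorial_mul_choose_le_pow N t
  have h4 : (4 : ℝ) ^ t = 2 ^ (2 * t) := by rw [pow_mul]; norm_num
  calc (#P : ℝ) * r ^ (2 * t) = 4 ^ t * (#P * (r / 2) ^ (2 * t)) := by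
        rw [div_pow, h4]; field_simp
    _ ≤ 4 ^ t * ((t ! : ℝ) ^ 2 * ∑ p ∈ P, ((#(U p)).choose t : ℝ) * (#(W p)).choose t) := by
        refine mul_le_mul_of_nonneg_left (hlow.trans_eq ?_) (by positivity)
        rw [mul_sum]
        exact sum_congr rfl fun p _ => by ring
    _ ≤ 4 ^ t * ((t ! : ℝ) ^ 2 * (N.choose t ^ 2 * f (B, D))) := by
        gcongr; exact_mod_cast hsum
    _ = 4 ^ t * ((t ! * N.choose t : ℝ) ^ 2 * f (B, D)) := by ring
    _ ≤ 4 ^ t * (N ^ (2 * t) * f (B, D)) := by gcongr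
    _ = (2 * N) ^ (2 * t) * f (B, D) := by rw [h4, mul_pow]; ring

end Counting

namespace AlternatingCycle

variable {V : Type*} [Fintype V] [DecidableEq V] (col : V → V → Bool)

def redNbhd (v : V) : Finset V := univ.filter fun u => u ≠ v ∧ col v u = true

def blueNbhd (v : V) : Finset V := univ.filter fun u => u ≠ v ∧ col v u = false

def IsAlternatingBlowup (t : ℕ) (A₁ A₂ A₃ A₄ : Finset V) : Prop :=
  Disjoint A₁ A₂ ∧ Disjoint A₁ A₃ ∧ Disjoint A₁ A₄ ∧
  Disjoint A₂ A₃ ∧ Disjoint A₂ A₄ ∧ Disjoint A₃ A₄ ∧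
  A₁.card = t ∧ A₂.card = t ∧ A₃.card = t ∧ A₄.card = t ∧
  (∀ u ∈ A₁, ∀ v ∈ A₂, col u v = true) ∧
  (∀ u ∈ A₃, ∀ v ∈ A₄, col u v = true) ∧
  (∀ u ∈ A₂, ∀ v ∈ A₃, col u v = false) ∧
  (∀ u ∈ A₄, ∀ v ∈ A₁, col u v = false)

def IsRichPair (γ : ℝ) (a c : V) : Prop :=
  γ * Fintype.card V ≤ #(redNbhd col a ∩ blueNbhd col c) ∧
    γ * Fintype.card V ≤ #(blueNbhd col a ∩ redNbhd col c)

noncomputable instance (γ : ℝ) (a : V) : DecidablePred (IsRichPair col γ a) := fun _ => by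
  unfold IsRichPair; infer_instance

noncomputable def richPartners (γ : ℝ) (a : V) : Finset V := {c | IsRichPair col γ a c}

variable {col}

@[simp]
lemma mem_redNbhd {u v : V} : u ∈ redNbhd col v ↔ u ≠ v ∧ col v u = true := by
  simp [redNbhd]

@[simp]
lemma mem_blueNbhd {u v : V} : u ∈ blueNbhd col v ↔ u ≠ v ∧ col v u = false := by
  simp [blueNbhd]

lemma disjoint_redNbhd_blueNbhd (v : V) : Disjoint (redNbhd col v) (blueNbhd col v) := by
  rw [disjoint_left]
  intro u hr hb
  simp_all

lemma mem_blueNbhd_of_notMem_redNbhd {u v : V} (huv : u ≠ v) (hu : u ∉ redNbhd col v) :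
    u ∈ blueNbhd col v := by
  simp_all

lemma mem_blueNbhd_comm (hsym : ∀ u v, col u v = col v u) {u v : V} :
    u ∈ blueNbhd col v ↔ v ∈ blueNbhd col u := by
  simp [hsym u v, ne_comm]

theorem exists_isAlternatingBlowup (hsym : ∀ u v, col u v = col v u) {t : ℕ} (ht : 1 ≤ t)
    {B D : Finset V} (hB : #B = t) (hD : #D = t)
    (hX : t ≤ #{a | B ⊆ redNbhd col a ∧ D ⊆ blueNbhd col a})
    (hZ : t ≤ #{c | B ⊆ blueNbhd col c ∧ D ⊆ redNbhd col c}) :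
    ∃ A₁ A₃, IsAlternatingBlowup col t A₁ B A₃ D := by
  obtain ⟨A₁, hA₁X, hA₁card⟩ := exists_subset_card_eq hX
  obtain ⟨A₃, hA₃Z, hA₃card⟩ := exists_subset_card_eq hZ
  have hA₁mem : ∀ a ∈ A₁, B ⊆ redNbhd col a ∧ D ⊆ blueNbhd col a := fun a ha =>
    (mem_filter.1 (hA₁X ha)).2
  have hA₃mem : ∀ c ∈ A₃, B ⊆ blueNbhd col c ∧ D ⊆ redNbhd col c := fun c hc =>
    (mem_filter.1 (hA₃Z hc)).2
  obtain ⟨b, hb⟩ : B.Nonempty := card_pos.1 (by omega)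
  obtain ⟨a, ha⟩ : A₁.Nonempty := card_pos.1 (by omega)
  refine ⟨A₁, A₃, ?_, ?_, ?_, ?_, ?_, ?_, hA₁card, hB, hA₃card, hD, ?_, ?_, ?_, ?_⟩
  · exact disjoint_left.2 fun x hx hxB => by simpa using (hA₁mem x hx).1 hxB
  · exact disjoint_left.2 fun x hx₁ hx₃ =>
      disjoint_left.1 (disjoint_redNbhd_blueNbhd x) ((hA₁mem x hx₁).1 hb) ((hA₃mem x hx₃).1 hb)
  · exact disjoint_left.2 fun x hx hxD => by simpa using (hA₁mem x hx).2 hxD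
  · exact disjoint_left.2 fun x hxB hx => by simpa using (hA₃mem x hx).1 hxB
  · exact (disjoint_redNbhd_blueNbhd a).mono (hA₁mem a ha).1 (hA₁mem a ha).2
  · exact disjoint_left.2 fun x hx hxD => by simpa using (hA₃mem x hx).2 hxD
  · exact fun u hu v hv => (mem_redNbhd.1 ((hA₁mem u hu).1 hv)).2
  · exact fun u hu v hv => (mem_redNbhd.1 ((hA₃mem u hu).2 hv)).2
  · exact fun u hu v hv => hsym u v ▸ (mem_blueNbhd.1 ((hA₃mem v hv).1 hu)).2
  · exact fun u hu v hv => hsym u v ▸ (mem_blueNbhd.1 ((hA₁mem v hv).2 hu)).2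

lemma card_mul_le_sum_card_inter_blueNbhd (hsym : ∀ u v, col u v = col v u) {δ : ℝ}
    (hδ : ∀ v, δ ≤ #(blueNbhd col v)) (S : Finset V) :
    #S * δ ≤ ∑ y, (#(S ∩ blueNbhd col y) : ℝ) := by
  have hdouble := sum_card_bipartiteAbove_eq_sum_card_bipartiteBelow (s := S) (t := univ)
    (r := fun x y => y ∈ blueNbhd col x)
  have hfibre : ∀ y, ({x ∈ S | y ∈ blueNbhd col x} : Finset V) = S ∩ blueNbhd col y := by
    intro y; ext x; rw [mem_filter, mem_inter, mem_blueNbhd_comm hsym]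
  simp only [bipartiteAbove, bipartiteBelow, filter_mem_eq_inter, univ_inter, hfibre] at hdouble
  calc #S * δ ≤ ∑ x ∈ S, (#(blueNbhd col x) : ℝ) := by
        rw [← nsmul_eq_mul]; exact card_nsmul_le_sum _ _ _ fun x _ => hδ x
    _ = ∑ y, (#(S ∩ blueNbhd col y) : ℝ) := by exact_mod_cast hdouble

lemma card_redNbhd_inter_blueNbhd_le {u y : V} (h : #(redNbhd col u) ≤ #(redNbhd col y)) :
    #(redNbhd col u ∩ blueNbhd col y) ≤ #(blueNbhd col u ∩ redNbhd col y) + 1 := by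
  calc #(redNbhd col u ∩ blueNbhd col y) ≤ #(redNbhd col u \ redNbhd col y) :=
        card_le_card fun x hx => mem_sdiff.2
          ⟨(mem_inter.1 hx).1, disjoint_right.1 (disjoint_redNbhd_blueNbhd y) (mem_inter.1 hx).2⟩
    _ ≤ #(redNbhd col y \ redNbhd col u) := card_sdiff_le_card_sdiff_iff.2 h
    _ ≤ #(insert u (blueNbhd col u ∩ redNbhd col y)) := by
        refine card_le_card fun x hx => ?_
        obtain ⟨hxy, hxu⟩ := mem_sdiff.1 hx
        by_cases h : x = u
        · exact h ▸ mem_insert_self _ _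
        · exact mem_insert_of_mem (mem_inter.2 ⟨mem_blueNbhd_of_notMem_redNbhd h hxu, hxy⟩)
    _ ≤ #(blueNbhd col u ∩ redNbhd col y) + 1 := card_insert_le _ _

/-- Each `y ∉ H` not rich with `u` contributes `< γn + 1`, every other `y` at most `n`. -/
lemma sum_card_redNbhd_inter_blueNbhd_le {γ : ℝ} (hγ : 0 ≤ γ) (H : Finset V) {u : V}
    (hu : ∀ y ∉ H, #(redNbhd col u) ≤ #(redNbhd col y)) :
    ∑ y, (#(redNbhd col u ∩ blueNbhd col y) : ℝ) ≤
      Fintype.card V * (γ * Fintype.card V + 1) + Fintype.card V * #H +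
        Fintype.card V * #(richPartners col γ u) := by
  set n : ℝ := (Fintype.card V : ℝ) with hn
  have hpoint : ∀ y, (#(redNbhd col u ∩ blueNbhd col y) : ℝ) ≤
      (γ * n + 1) + (if y ∈ H then n else 0) + (if IsRichPair col γ u y then n else 0) := by
    intro y
    have hle_n : (#(redNbhd col u ∩ blueNbhd col y) : ℝ) ≤ n := by
      rw [hn]; exact_mod_cast card_le_univ _
    have : 0 ≤ γ * n + 1 := by positivity
    by_cases hyH : y ∈ H
    · rw [if_pos hyH]; split_ifs <;> linarith
    by_cases hrich : IsRichPair col γ u y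
    · rw [if_neg hyH, if_pos hrich]; linarith
    rw [if_neg hyH, if_neg hrich, add_zero, add_zero]
    have hcomp : (#(redNbhd col u ∩ blueNbhd col y) : ℝ) ≤
        #(blueNbhd col u ∩ redNbhd col y) + 1 := by
      exact_mod_cast card_redNbhd_inter_blueNbhd_le (hu y hyH)
    rw [IsRichPair, not_and_or, not_le, not_le] at hrich
    rcases hrich with h | h <;> linarith
  refine (sum_le_sum fun y _ => hpoint y).trans_eq ?_
  simp only [sum_add_distrib, sum_const, card_univ, nsmul_eq_mul, sum_ite_mem, univ_inter,
    ← sum_filter, richPartners]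
  ring

lemma le_card_filter_lt_card_richPartners (hsym : ∀ u v, col u v = col v u) {ε : ℝ} (hε : 0 ≤ ε)
    (hε1 : ε ≤ 1)
    (hbal : ∀ v, ε * Fintype.card V ≤ #(redNbhd col v) ∧ ε * Fintype.card V ≤ #(blueNbhd col v))
    (hn : 8 ≤ ε ^ 2 * Fintype.card V) :
    ε ^ 2 * Fintype.card V / 2 ≤
      #{v | ε ^ 2 * Fintype.card V / 8 < #(richPartners col (ε ^ 2 / 4) v)} := by
  set n : ℝ := (Fintype.card V : ℝ) with hn_def
  set H : Finset V := {v | ε ^ 2 * n / 8 < #(richPartners col (ε ^ 2 / 4) v)}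
  have hn0 : 0 < n := by
    by_contra h
    nlinarith [sq_nonneg ε]
  rcases (univ \ H).eq_empty_or_nonempty with hH | hne
  · rw [sdiff_eq_empty_iff_subset, univ_subset_iff] at hH
    rw [hH, card_univ, ← hn_def]
    have : ε ^ 2 ≤ 1 := pow_le_one₀ hε hε1
    nlinarith
  obtain ⟨u, huH, humin⟩ := (univ \ H).exists_min_image (fun v => #(redNbhd col v)) hne
  have hlow : (ε * n) ^ 2 ≤ ∑ y, (#(redNbhd col u ∩ blueNbhd col y) : ℝ) := by
    rw [sq]
    refine le_trans ?_ (card_mul_le_sum_card_inter_blueNbhd hsym (fun v => (hbal v).2) _)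
    exact mul_le_mul_of_nonneg_right (hbal u).1 (by positivity)
  have hup := sum_card_redNbhd_inter_blueNbhd_le (γ := ε ^ 2 / 4) (by positivity) H
    (u := u) fun y hy => humin y (mem_sdiff.2 ⟨mem_univ y, hy⟩)
  rw [← hn_def] at hup
  have hu : (#(richPartners col (ε ^ 2 / 4) u) : ℝ) ≤ ε ^ 2 * n / 8 := by
    simpa [H] using (mem_sdiff.1 huH).2
  have : n * (ε ^ 2 * n / 2) ≤ n * #H := by nlinarith
  exact le_of_mul_le_mul_left this hn0

theorem le_card_richPairs (hsym : ∀ u v, col u v = col v u) {ε : ℝ} (hε : 0 ≤ ε)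
    (hε1 : ε ≤ 1)
    (hbal : ∀ v, ε * Fintype.card V ≤ #(redNbhd col v) ∧ ε * Fintype.card V ≤ #(blueNbhd col v))
    (hn : 8 ≤ ε ^ 2 * Fintype.card V) :
    ε ^ 4 / 16 * Fintype.card V ^ 2 ≤ #{p : V × V | IsRichPair col (ε ^ 2 / 4) p.1 p.2} := by
  set n : ℝ := (Fintype.card V : ℝ)
  set H : Finset V := {v | ε ^ 2 * n / 8 < #(richPartners col (ε ^ 2 / 4) v)}
  have hfibres : #{p : V × V | IsRichPair col (ε ^ 2 / 4) p.1 p.2} =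
      ∑ v, #(richPartners col (ε ^ 2 / 4) v) := by
    rw [card_filter, ← univ_product_univ, sum_product]
    simp_rw [← card_filter]
    rfl
  have hH := le_card_filter_lt_card_richPartners hsym hε hε1 hbal hn
  calc ε ^ 4 / 16 * n ^ 2 = ε ^ 2 * n / 2 * (ε ^ 2 * n / 8) := by ring
    _ ≤ #H * (ε ^ 2 * n / 8) := by gcongr
    _ ≤ ∑ v ∈ H, (#(richPartners col (ε ^ 2 / 4) v) : ℝ) := by
        rw [← nsmul_eq_mul]
        exact card_nsmul_le_sum _ _ _ fun v hv => (mem_filter.1 hv).2.le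
    _ ≤ ∑ v, (#(richPartners col (ε ^ 2 / 4) v) : ℝ) :=
        sum_le_sum_of_subset_of_nonneg (subset_univ H) fun _ _ _ => by positivity
    _ = #{p : V × V | IsRichPair col (ε ^ 2 / 4) p.1 p.2} := by rw [hfibres]; push_cast; rfl

theorem exists_isAlternatingBlowup_of_balanced (hsym : ∀ u v, col u v = col v u) {ε : ℝ}
    (hε : 0 < ε) (hε1 : ε ≤ 1)
    (hbal : ∀ v, ε * Fintype.card V ≤ #(redNbhd col v) ∧ ε * Fintype.card V ≤ #(blueNbhd col v))
    {t : ℕ} (ht : 1 ≤ t) (hn : 16 * t ≤ ε ^ 4 * (ε ^ 2 / 8) ^ (2 * t) * Fintype.card V) :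
    ∃ A₁ A₂ A₃ A₄, IsAlternatingBlowup col t A₁ A₂ A₃ A₄ := by
  set n : ℝ := (Fintype.card V : ℝ)
  have htR : (1 : ℝ) ≤ t := by exact_mod_cast ht
  have hsmall : ε ^ 4 * (ε ^ 2 / 8) ^ (2 * t) ≤ ε ^ 2 / 8 := by
    have h8 : ε ^ 2 / 8 ≤ 1 := by nlinarith
    calc ε ^ 4 * (ε ^ 2 / 8) ^ (2 * t) ≤ 1 * (ε ^ 2 / 8) ^ 1 :=
          mul_le_mul (pow_le_one₀ hε.le hε1) (pow_le_pow_of_le_one (by positivity) h8 (by omega))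
            (by positivity) zero_le_one
      _ = ε ^ 2 / 8 := by ring
  have hn0 : 0 < n := by
    by_contra h
    nlinarith [(by positivity : 0 ≤ ε ^ 4 * (ε ^ 2 / 8) ^ (2 * t))]
  have htn : 8 * t ≤ ε ^ 2 * n := by nlinarith
  set P : Finset (V × V) := {p | IsRichPair col (ε ^ 2 / 4) p.1 p.2}
  have hP := le_card_richPairs hsym hε.le hε1 hbal (by nlinarith)
  have hPne : P.Nonempty := card_pos.1 (by
    have : (0 : ℝ) < #P := lt_of_lt_of_le (by positivity) hP
    exact_mod_cast this)
  obtain ⟨B, D, hB, hD, hcount⟩ := exists_card_filter_subset_subset_ge P hPne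
    (fun p => redNbhd col p.1 ∩ blueNbhd col p.2) (fun p => blueNbhd col p.1 ∩ redNbhd col p.2)
    (t := t) (r := ε ^ 2 / 4 * n) (by linarith) (fun p hp => (mem_filter.1 hp).2.1)
    (fun p hp => (mem_filter.1 hp).2.2)
  set X : Finset V := {a | B ⊆ redNbhd col a ∧ D ⊆ blueNbhd col a}
  set Z : Finset V := {c | B ⊆ blueNbhd col c ∧ D ⊆ redNbhd col c}
  have hsub : {p ∈ P | B ⊆ redNbhd col p.1 ∩ blueNbhd col p.2 ∧
      D ⊆ blueNbhd col p.1 ∩ redNbhd col p.2} ⊆ X ×ˢ Z := by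
    intro p hp
    simp only [mem_filter, subset_inter_iff] at hp
    simp only [X, Z, mem_product, mem_filter, mem_univ, true_and]
    tauto
  have hXZ : t * Fintype.card V ≤ #X * #Z := by
    rw [← card_product]
    refine le_trans ?_ (card_le_card hsub)
    have hpow : (0 : ℝ) < (2 * n) ^ (2 * t) := by positivity
    refine Nat.cast_le.1 (le_of_mul_le_mul_left ?_ hpow)
    calc (2 * n) ^ (2 * t) * ((t * Fintype.card V : ℕ) : ℝ)
        = 16 * t * (n / 16 * (2 * n) ^ (2 * t)) := by push_cast; ring
      _ ≤ ε ^ 4 * (ε ^ 2 / 8) ^ (2 * t) * n * (n / 16 * (2 * n) ^ (2 * t)) := by gcongr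
      _ = ε ^ 4 / 16 * n ^ 2 * (ε ^ 2 / 4 * n) ^ (2 * t) := by
          rw [show (ε ^ 2 / 4 * n) ^ (2 * t) = (ε ^ 2 / 8) ^ (2 * t) * (2 * n) ^ (2 * t) by
            rw [← mul_pow]; ring_nf]
          ring
      _ ≤ #P * (ε ^ 2 / 4 * n) ^ (2 * t) := by gcongr
      _ ≤ _ := hcount
  have hX : t ≤ #X := Nat.le_of_mul_le_mul_right
    (hXZ.trans (Nat.mul_le_mul_left _ (card_le_univ Z))) (Nat.cast_pos.1 hn0)
  have hZ : t ≤ #Z := Nat.le_of_mul_le_mul_right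
    (hXZ.trans ((Nat.mul_le_mul_right _ (card_le_univ X)).trans_eq (mul_comm _ _)))
    (Nat.cast_pos.1 hn0)
  obtain ⟨A₁, A₃, hblowup⟩ := exists_isAlternatingBlowup hsym ht hB hD hX hZ
  exact ⟨A₁, B, A₃, D, hblowup⟩

end AlternatingCycle

lemma pow_le_two_rpow_mul {y : ℝ} (hy : 1 ≤ y) (k : ℕ) : y ^ k ≤ (2 : ℝ) ^ (k * y) := by
  have hy2 : y ≤ (2 : ℝ) ^ y := by
    have := one_add_mul_self_le_rpow_one_add (s := 1) (by norm_num) hy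
    norm_num at this
    linarith
  rw [mul_comm, Real.rpow_mul_natCast (by norm_num)]
  gcongr

lemma sixteen_mul_pow_le_pow {y : ℝ} (hy : 2 ≤ y) {t : ℕ} (ht : 1 ≤ t) :
    16 * t * y ^ 4 * (8 * y ^ 2) ^ (2 * t) ≤ y ^ (20 * t) := by
  have hy1 : 1 ≤ y := by linarith
  have h16 : (16 : ℝ) ≤ y ^ 4 := by nlinarith [pow_le_pow_left₀ (by norm_num) hy 4]
  have h64 : (64 : ℝ) ≤ y ^ 6 := by nlinarith [pow_le_pow_left₀ (by norm_num) hy 6]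
  have hty : (t : ℝ) ≤ y ^ t := calc
    (t : ℝ) ≤ 2 ^ t := by exact_mod_cast t.lt_two_pow_self.le
    _ ≤ y ^ t := pow_le_pow_left₀ (by norm_num) hy t
  calc 16 * t * y ^ 4 * (8 * y ^ 2) ^ (2 * t) = 16 * t * y ^ 4 * (64 * y ^ 4) ^ t := by
        rw [pow_mul]; ring
    _ ≤ y ^ 4 * y ^ t * y ^ 4 * (y ^ 6 * y ^ 4) ^ t := by gcongr
    _ = y ^ (8 + 11 * t) := by ring
    _ ≤ y ^ (20 * t) := pow_le_pow_right₀ hy1 (by omega)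

lemma sixteen_mul_le_mul_two_rpow {ε : ℝ} (hε : 0 < ε) (hε2 : ε ≤ 1 / 2) {t : ℕ} (ht : 1 ≤ t) :
    16 * t ≤ ε ^ 4 * (ε ^ 2 / 8) ^ (2 * t) * (2 : ℝ) ^ (20 * t / ε ^ 16) := by
  set y := ε⁻¹
  have hy : 2 ≤ y := by rw [← inv_inv (2 : ℝ)]; exact inv_anti₀ hε (by linarith)
  have hεy : ε * y = 1 := mul_inv_cancel₀ hε.ne'
  calc (16 * t : ℝ) = 16 * t * ((ε * y) ^ 4 * (ε ^ 2 / 8 * (8 * y ^ 2)) ^ (2 * t)) := by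
        rw [show ε ^ 2 / 8 * (8 * y ^ 2) = (ε * y) ^ 2 by ring, hεy]; simp
    _ = ε ^ 4 * (ε ^ 2 / 8) ^ (2 * t) * (16 * t * y ^ 4 * (8 * y ^ 2) ^ (2 * t)) := by
        rw [mul_pow (ε ^ 2 / 8)]; ring
    _ ≤ ε ^ 4 * (ε ^ 2 / 8) ^ (2 * t) * y ^ (20 * t) := by
        gcongr; exact sixteen_mul_pow_le_pow hy ht
    _ ≤ ε ^ 4 * (ε ^ 2 / 8) ^ (2 * t) * (2 : ℝ) ^ (20 * t / ε ^ 16) := by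
        gcongr
        refine (pow_le_two_rpow_mul (by linarith) _).trans
          (Real.rpow_le_rpow_of_exponent_le (by norm_num) ?_)
        rw [div_eq_mul_inv, ← inv_pow]
        push_cast
        gcongr
        exact le_self_pow₀ (by linarith) (by norm_num)

open AlternatingCycle

/-- the abstract's assertion: a locally ε-balanced 2-colouring of K_n with
n ≥ 2^{Ct/ε¹⁶} contains a t-blow-up of an alternating 4-cycle. Colour `true` is red,
`false` is blue. -/
theorem stmt_15 :
    ∃ C : ℝ, 0 < C ∧
      ∀ (ε : ℝ), 0 < ε → ε ≤ 1/2 →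
      ∀ (t : ℕ), 1 ≤ t →
      ∀ (n : ℕ) (col : Fin n → Fin n → Bool),
        (2 : ℝ) ^ (C * t / ε ^ 16) ≤ (n : ℝ) →
        (∀ u v, col u v = col v u) →
        (∀ v : Fin n,
          ε * n ≤ ((univ.filter fun u => u ≠ v ∧ col v u = true).card : ℝ) ∧
          ε * n ≤ ((univ.filter fun u => u ≠ v ∧ col v u = false).card : ℝ)) →
        ∃ A₁ A₂ A₃ A₄ : Finset (Fin n),
          Disjoint A₁ A₂ ∧ Disjoint A₁ A₃ ∧ Disjoint A₁ A₄ ∧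
          Disjoint A₂ A₃ ∧ Disjoint A₂ A₄ ∧ Disjoint A₃ A₄ ∧
          A₁.card = t ∧ A₂.card = t ∧ A₃.card = t ∧ A₄.card = t ∧
          (∀ u ∈ A₁, ∀ v ∈ A₂, col u v = true) ∧
          (∀ u ∈ A₃, ∀ v ∈ A₄, col u v = true) ∧
          (∀ u ∈ A₂, ∀ v ∈ A₃, col u v = false) ∧
          (∀ u ∈ A₄, ∀ v ∈ A₁, col u v = false) := by
  refine ⟨20, by norm_num, fun ε hε hε2 t ht n col hn hsym hbal => ?_⟩
  have hlarge : 16 * t ≤ ε ^ 4 * (ε ^ 2 / 8) ^ (2 * t) * Fintype.card (Fin n) := by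
    rw [Fintype.card_fin]
    exact (sixteen_mul_le_mul_two_rpow hε hε2 ht).trans
      (mul_le_mul_of_nonneg_left hn (by positivity))
  exact exists_isAlternatingBlowup_of_balanced hsym hε (by linarith)
    (fun v => by rw [Fintype.card_fin]; exact hbal v) ht hlarge
end

section
/- For every integer k ≥ 1 there exists a 2-edge-colouring of the complete graph K_{4k} such that every vertex has at least k red neighbours and at least k blue neighbours (so the colouring is locally 1/4-balanced), and yet there is no 4-element vertex set {a, b, c, d} and colour γ such that the edges ab and cd have colour γ while the edges ac, ad, bc, bd all have the other colour; that is, the colouring contains no complete subgraph on 4 vertices in which one colour class forms two disjoint edges. -/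
open Finset

/-- Auxiliary: a finset of `Fin (4*k)` containing a full interval `[o, o+k)` has at
least `k` elements. -/
lemma aux_card_interval (k o : ℕ) (s : Finset (Fin (4 * k))) (ho : o + k ≤ 4 * k)
    (h : ∀ i : Fin (4 * k), o ≤ i.val → i.val < o + k → i ∈ s) : k ≤ s.card := by
  have := Finset.card_le_card_of_injOn
      (f := fun i : Fin k => (⟨o + i.val, by omega⟩ : Fin (4 * k)))
      (s := Finset.univ) (t := s)
      (fun i _ => h _ (Nat.le_add_right o i.val)
        (by have := i.isLt; show o + i.val < o + k; omega))
      (fun i _ j _ hij => by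
        have : o + i.val = o + j.val := congrArg Fin.val hij
        exact Fin.val_injective (by omega))
  simpa using this

lemma aux_pat_lt (k x y : ℕ)
    (h : (x < 2*k ∧ y < 2*k) ∨
      (x < k ∧ 2*k ≤ y ∧ y < 3*k) ∨
      (y < k ∧ 2*k ≤ x ∧ x < 3*k) ∨
      (k ≤ x ∧ x < 2*k ∧ 3*k ≤ y) ∨
      (k ≤ y ∧ y < 2*k ∧ 3*k ≤ x)) : x < 2*k ∨ y < 2*k := by omega

lemma aux_pat_ge (k x y : ℕ)
    (h : ¬ ((x < 2*k ∧ y < 2*k) ∨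
      (x < k ∧ 2*k ≤ y ∧ y < 3*k) ∨
      (y < k ∧ 2*k ≤ x ∧ x < 3*k) ∨
      (k ≤ x ∧ x < 2*k ∧ 3*k ≤ y) ∨
      (k ≤ y ∧ y < 2*k ∧ 3*k ≤ x))) : 2*k ≤ x ∨ 2*k ≤ y := by omega

/-- the construction 𝒫_k: a 2-colouring of K_{4k} in which every vertex
has at least k neighbours of each colour, containing no complete subgraph on 4 vertices
in which one colour class forms two disjoint edges. -/
theorem stmt_16 (k : ℕ) (hk : 1 ≤ k) :
    ∃ col : Fin (4 * k) → Fin (4 * k) → Bool,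
      (∀ u v, col u v = col v u) ∧
      (∀ v : Fin (4 * k),
        k ≤ (univ.filter fun u => u ≠ v ∧ col v u = true).card ∧
        k ≤ (univ.filter fun u => u ≠ v ∧ col v u = false).card) ∧
      ¬ ∃ (a b c d : Fin (4 * k)) (γ : Bool),
          a ≠ b ∧ a ≠ c ∧ a ≠ d ∧ b ≠ c ∧ b ≠ d ∧ c ≠ d ∧
          col a b = γ ∧ col c d = γ ∧
          col a c = !γ ∧ col a d = !γ ∧ col b c = !γ ∧ col b d = !γ := by
  refine ⟨fun u v => decide ((u.val < 2*k ∧ v.val < 2*k) ∨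
      (u.val < k ∧ 2*k ≤ v.val ∧ v.val < 3*k) ∨
      (v.val < k ∧ 2*k ≤ u.val ∧ u.val < 3*k) ∨
      (k ≤ u.val ∧ u.val < 2*k ∧ 3*k ≤ v.val) ∨
      (k ≤ v.val ∧ v.val < 2*k ∧ 3*k ≤ u.val)), ?_, ?_, ?_⟩
  · intro u v
    simp only [decide_eq_decide]
    tauto
  · intro v
    constructor
    · by_cases hv : v.val < k ∨ 3*k ≤ v.val
      · refine aux_card_interval k k _ (by omega) (fun i h1 h2 => ?_)
        simp only [Finset.mem_filter, Finset.mem_univ, true_and, decide_eq_true_eq]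
        exact ⟨Fin.ne_of_val_ne (by omega), by omega⟩
      · refine aux_card_interval k 0 _ (by omega) (fun i h1 h2 => ?_)
        simp only [Finset.mem_filter, Finset.mem_univ, true_and, decide_eq_true_eq]
        exact ⟨Fin.ne_of_val_ne (by omega), by omega⟩
    · by_cases hv : v.val < k ∨ (2*k ≤ v.val ∧ v.val < 3*k)
      · refine aux_card_interval k (3*k) _ (by omega) (fun i h1 h2 => ?_)
        simp only [Finset.mem_filter, Finset.mem_univ, true_and,
          decide_eq_false_iff_not]
        exact ⟨Fin.ne_of_val_ne (by omega), by omega⟩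
      · refine aux_card_interval k (2*k) _ (by omega) (fun i h1 h2 => ?_)
        simp only [Finset.mem_filter, Finset.mem_univ, true_and,
          decide_eq_false_iff_not]
        exact ⟨Fin.ne_of_val_ne (by omega), by omega⟩
  · rintro ⟨a, b, c, d, γ, -, -, -, -, -, -, hab, hcd, hac, had, hbc, hbd⟩
    cases γ <;>
      simp only [Bool.not_true, Bool.not_false, decide_eq_true_eq,
        decide_eq_false_iff_not] at hab hcd hac had hbc hbd
    · -- γ = false : ab, cd blue; the rest red
      have h1 := aux_pat_lt k _ _ hac
      have h2 := aux_pat_lt k _ _ had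
      have h3 := aux_pat_lt k _ _ hbc
      have h4 := aux_pat_lt k _ _ hbd
      have h5 := aux_pat_ge k _ _ hab
      have h6 := aux_pat_ge k _ _ hcd
      omega
    · -- γ = true : ab, cd red; the rest blue
      have h1 := aux_pat_lt k _ _ hab
      have h2 := aux_pat_lt k _ _ hcd
      have h3 := aux_pat_ge k _ _ hac
      have h4 := aux_pat_ge k _ _ had
      have h5 := aux_pat_ge k _ _ hbc
      have h6 := aux_pat_ge k _ _ hbd
      omega
end
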